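/- arXiv:2303.00709 — 7 statements merged into one kernel-verified Lean document; each statement's English description precedes it below -/
import Mathlib

section
/- Let L ∈ ℝ^{n×n} be a weighted graph Laplacian and let v be a vertex with L(v,v) > 0. Then the Schur complement of L eliminating the row and column v, namely the matrix L − star_v(L) + (star_v(L) − (1/L(v,v)) L(:,v) L(v,:)) (equivalently, the principal submatrix on [n]∖{v} of L minus (1/L(v,v))·L(:,v)L(v,:)), is again a weighted graph Laplacian on the remaining n−1 vertices. -/
open Matrix Finset

/-- `edgeVec i j = e_i - e_j`, the pair vector of an edge. -/
def edgeVec {m : Type*} [DecidableEq m] (i j : m) : m → ℝ :=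
  fun k => (if k = i then 1 else 0) - (if k = j then 1 else 0)

/-- A matrix is a weighted graph Laplacian if it is a nonnegative combination of
edge Laplacians `(e_i - e_j)(e_i - e_j)ᵀ`. -/
def IsLaplacian {m : Type*} [Fintype m] [LinearOrder m] (L : Matrix m m ℝ) : Prop :=
  ∃ w : m → m → ℝ, (∀ i j, 0 ≤ w i j) ∧ (∀ i j, w i j = w j i) ∧
    L = ∑ i, ∑ j, if i < j then
      w i j • Matrix.vecMulVec (edgeVec i j) (edgeVec i j) else 0

lemma sum_lt_half {m : Type*} [Fintype m] [LinearOrder m] (f : m → m → ℝ)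
    (hdiag : ∀ i, f i i = 0) (hsym : ∀ i j, f i j = f j i) :
    ∑ i, ∑ j, (if i < j then f i j else 0) = (∑ i, ∑ j, f i j) / 2 := by
  have key : ∑ i, ∑ j, f i j
      = (∑ i, ∑ j, (if i < j then f i j else 0)) + (∑ i, ∑ j, (if j < i then f i j else 0)) := by
    rw [← Finset.sum_add_distrib]
    refine Finset.sum_congr rfl fun i _ => ?_
    rw [← Finset.sum_add_distrib]
    refine Finset.sum_congr rfl fun j _ => ?_
    rcases lt_trichotomy i j with h | h | h
    · simp [h, not_lt_of_gt h]
    · simp [h, hdiag]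
    · simp [h, not_lt_of_gt h]
  have swap : (∑ i, ∑ j, (if j < i then f i j else 0))
      = ∑ i, ∑ j, (if i < j then f i j else 0) := by
    rw [Finset.sum_comm]
    exact Finset.sum_congr rfl fun i _ => Finset.sum_congr rfl fun j _ => by
      rw [hsym]
  rw [key, swap]; ring

lemma lap_entry {m : Type*} [Fintype m] [LinearOrder m] (w : m → m → ℝ)
    (hsym : ∀ i j, w i j = w j i) (a b : m) :
    (∑ i, ∑ j, if i < j then w i j • Matrix.vecMulVec (edgeVec i j) (edgeVec i j)
      else (0 : Matrix m m ℝ)) a b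
      = if a = b then (∑ j, w a j) - w a a else - w a b := by
  have h1 : (∑ i, ∑ j, if i < j then w i j • Matrix.vecMulVec (edgeVec i j) (edgeVec i j)
      else (0 : Matrix m m ℝ)) a b
      = ∑ i, ∑ j, (if i < j then w i j * (edgeVec i j a * edgeVec i j b) else 0) := by
    simp only [Matrix.sum_apply]
    refine Finset.sum_congr rfl fun i _ => Finset.sum_congr rfl fun j _ => ?_
    split <;> simp [Matrix.vecMulVec_apply, mul_assoc]
  rw [h1, sum_lt_half]
  · have expand : ∀ i j : m, w i j * (edgeVec i j a * edgeVec i j b)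
        = ((w i j * (if a = i then 1 else 0)) * (if b = i then 1 else 0)
         + (w i j * (if a = j then 1 else 0)) * (if b = j then 1 else 0))
         - ((w i j * (if a = i then 1 else 0)) * (if b = j then 1 else 0)
         + (w i j * (if a = j then 1 else 0)) * (if b = i then 1 else 0)) := by
      intro i j; simp only [edgeVec]; ring
    simp only [expand, Finset.sum_sub_distrib, Finset.sum_add_distrib]
    simp only [mul_ite, mul_one, mul_zero, ite_mul, zero_mul,
      Finset.sum_ite_eq, Finset.sum_ite_eq', Finset.mem_univ, if_true]
    rcases eq_or_ne a b with rfl | hab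
    · have hss : ∑ x, w x a = ∑ x, w a x := Finset.sum_congr rfl fun x _ => hsym x a
      simp [hss]
      ring
    · simp [hab, Ne.symm hab, hsym b a]
  · intro i; simp [edgeVec]
  · intro i j
    have : edgeVec j i a * edgeVec j i b = edgeVec i j a * edgeVec i j b := by
      simp [edgeVec]; ring
    rw [hsym, this]

/-- The Schur complement of a weighted graph Laplacian eliminating one vertex `v`
with `L(v,v) > 0` is again a weighted graph Laplacian on the remaining vertices. -/
theorem schur_one_vertex_isLaplacian {n : ℕ} (L : Matrix (Fin n) (Fin n) ℝ)
    (hL : IsLaplacian L) (v : Fin n) (hv : 0 < L v v) :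
    IsLaplacian (Matrix.of fun i j : {k : Fin n // k ≠ v} =>
      L i j - L i v * L v j / L v v) := by
  obtain ⟨w, hw, hsym, hdef⟩ := hL
  have hent : ∀ a b : Fin n, L a b
      = if a = b then (∑ j, w a j) - w a a else - w a b := by
    intro a b; rw [hdef, lap_entry w hsym a b]
  have hd : L v v = (∑ j, w v j) - w v v := by rw [hent]; simp
  have hd0 : L v v ≠ 0 := ne_of_gt hv
  set W : {k : Fin n // k ≠ v} → {k : Fin n // k ≠ v} → ℝ :=
    fun i j => if i = j then 0
      else w i.1 j.1 + w i.1 v * w v j.1 / L v v with hW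
  refine ⟨W, ?_, ?_, ?_⟩
  · intro i j
    rw [hW]
    dsimp only
    split
    · exact le_refl 0
    · exact add_nonneg (hw _ _)
        (div_nonneg (mul_nonneg (hw _ _) (hw _ _)) hv.le)
  · intro i j
    rw [hW]
    dsimp only
    rcases eq_or_ne i j with rfl | hij
    · rfl
    · rw [if_neg hij, if_neg (Ne.symm hij), hsym i.1 j.1, hsym i.1 v, hsym v j.1]
      ring
  · ext a b
    rw [lap_entry W (by
      intro i j
      rw [hW]; dsimp only
      rcases eq_or_ne i j with rfl | hij
      · rfl
      · rw [if_neg hij, if_neg (Ne.symm hij), hsym i.1 j.1, hsym i.1 v, hsym v j.1]; ring) a b]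
    rcases eq_or_ne a b with rfl | hab
    · -- diagonal case
      rw [if_pos rfl, Matrix.of_apply]
      have hWaa : W a a = 0 := by rw [hW]; simp
      -- sum over subtype
      set h : Fin n → ℝ := fun k => w a.1 k + w a.1 v * w v k / L v v with hh
      have hWsub : ∀ j : {k : Fin n // k ≠ v}, W a j
          = h j.1 - (if a.1 = j.1 then h j.1 else 0) := by
        intro j
        rcases eq_or_ne a j with rfl | haj
        · simp [hWaa]
        · have : a.1 ≠ j.1 := fun hc => haj (Subtype.ext hc)
          rw [hW]; dsimp only
          rw [if_neg haj, if_neg this, hh]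
          dsimp only
          rw [sub_zero]
      have hsum : ∑ j : {k : Fin n // k ≠ v}, W a j
          = (∑ k, h k) - h v - h a.1 := by
        calc ∑ j : {k : Fin n // k ≠ v}, W a j
            = ∑ j : {k : Fin n // k ≠ v}, (h j.1 - (if a.1 = j.1 then h j.1 else 0)) :=
              Finset.sum_congr rfl fun j _ => hWsub j
          _ = ∑ k ∈ ({v}ᶜ : Finset (Fin n)), (h k - (if a.1 = k then h k else 0)) := by
              rw [Finset.sum_subtype (p := fun k => k ≠ v) ({v}ᶜ : Finset (Fin n)) (by simp)]
          _ = (∑ k ∈ ({v}ᶜ : Finset (Fin n)), h k)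
              - ∑ k ∈ ({v}ᶜ : Finset (Fin n)), (if a.1 = k then h k else 0) := by
              rw [Finset.sum_sub_distrib]
          _ = (∑ k, h k) - h v - h a.1 := by
              rw [Finset.sum_ite_eq]
              have hmem : a.1 ∈ ({v}ᶜ : Finset (Fin n)) := by simp [a.2]
              rw [if_pos hmem]
              congr 1
              have := Finset.sum_add_sum_compl ({v} : Finset (Fin n)) h
              rw [Finset.sum_singleton] at this
              linarith
      rw [hsum, hWaa]
      have h1 : L a.1 a.1 = (∑ j, w a.1 j) - w a.1 a.1 := by rw [hent]; simp
      have h2 : L a.1 v = - w a.1 v := by rw [hent, if_neg a.2]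
      have h3 : L v a.1 = - w v a.1 := by rw [hent, if_neg (Ne.symm a.2)]
      rw [h1, h2, h3, hh]
      dsimp only
      have hTv : ∑ k, w v k = L v v + w v v := by rw [hd]; ring
      rw [Finset.sum_add_distrib]
      have : ∑ k, w a.1 v * w v k / L v v = w a.1 v * (∑ k, w v k) / L v v := by
        rw [← Finset.sum_div, ← Finset.mul_sum]
      rw [this, hTv, hsym v a.1]
      field_simp
      ring
    · -- off-diagonal case
      have hab' : a.1 ≠ b.1 := fun hc => hab (Subtype.ext hc)
      rw [if_neg hab, Matrix.of_apply]
      have h1 : L a.1 b.1 = - w a.1 b.1 := by rw [hent, if_neg hab']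
      have h2 : L a.1 v = - w a.1 v := by rw [hent, if_neg a.2]
      have h3 : L v b.1 = - w v b.1 := by rw [hent, if_neg (Ne.symm b.2)]
      rw [h1, h2, h3, hW]
      dsimp only
      rw [if_neg hab]
      ring
end

section
/- Let L ∈ ℝ^{n×n} be the weighted graph Laplacian of a connected weighted graph with strictly positive edge weights on n ≥ 2 vertices, and let C ⊆ [n] be a subset whose complement C̄ is nonempty and proper. Then the principal submatrix L[C̄,C̄] is invertible (indeed positive definite), and the Schur complement Schur(L, C) = L[C,C] − L[C,C̄](L[C̄,C̄])⁻¹L[C̄,C] is again a weighted graph Laplacian on the vertex set C. -/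
open Matrix Finset

section Helpers

variable {m : Type*} [Fintype m] [LinearOrder m]

noncomputable def lapOf (w : m → m → ℝ) : Matrix m m ℝ :=
  ∑ i, ∑ j, if i < j then w i j • Matrix.vecMulVec (edgeVec i j) (edgeVec i j) else 0

lemma lapOf_apply (w : m → m → ℝ) (a b : m) :
    lapOf w a b = ∑ i, ∑ j,
      (if i < j then w i j * (edgeVec i j a * edgeVec i j b) else 0) := by
  simp only [lapOf, Matrix.sum_apply]
  refine Finset.sum_congr rfl fun i _ => Finset.sum_congr rfl fun j _ => ?_
  by_cases h : i < j
  · simp [h, Matrix.vecMulVec_apply, mul_assoc]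
  · simp [h]

lemma edgeVec_sum (i j : m) : ∑ b, edgeVec i j b = 0 := by
  simp [edgeVec, Finset.sum_sub_distrib, Finset.sum_ite_eq']

lemma edgeVec_dot (i j : m) (x : m → ℝ) :
    edgeVec i j ⬝ᵥ x = x i - x j := by
  simp [edgeVec, dotProduct, sub_mul, Finset.sum_sub_distrib, ite_mul,
    Finset.sum_ite_eq']


lemma lapOf_rowSum (w : m → m → ℝ) (a : m) : ∑ b, lapOf w a b = 0 := by
  have h1 : ∑ b, lapOf w a b = ∑ i, ∑ j, ∑ b,
      (if i < j then w i j * (edgeVec i j a * edgeVec i j b) else 0) := by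
    simp_rw [lapOf_apply]
    rw [Finset.sum_comm]
    exact Finset.sum_congr rfl fun i _ => Finset.sum_comm
  rw [h1]
  refine Finset.sum_eq_zero fun i _ => Finset.sum_eq_zero fun j _ => ?_
  by_cases h : i < j
  · simp only [if_pos h]
    have h2 : ∀ b, w i j * (edgeVec i j a * edgeVec i j b)
        = (w i j * edgeVec i j a) * edgeVec i j b := fun b => by ring
    rw [Finset.sum_congr rfl fun b _ => h2 b, ← Finset.mul_sum, edgeVec_sum, mul_zero]
  · simp [h]

lemma lapOf_offdiag_lt (w : m → m → ℝ) {a b : m} (hab : a < b) :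
    lapOf w a b = -w a b := by
  rw [lapOf_apply]
  rw [Finset.sum_eq_single_of_mem a (Finset.mem_univ a) ?h0]
  case h0 =>
    intro i _ hia
    refine Finset.sum_eq_zero fun j _ => ?_
    by_cases hij : i < j
    · rw [if_pos hij]
      rcases eq_or_ne a j with rfl | haj
      · rcases eq_or_ne b i with rfl | hbi
        · exact absurd hij (asymm hab)
        · have hbj : b ≠ a := hab.ne'
          simp [edgeVec, hbi, hbj]
      · simp [edgeVec, (Ne.symm hia), haj]
    · rw [if_neg hij]
  rw [Finset.sum_eq_single_of_mem b (Finset.mem_univ b) ?h1]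
  case h1 =>
    intro j _ hjb
    by_cases haj : a < j
    · rw [if_pos haj]
      simp [edgeVec, hab.ne', (Ne.symm hjb)]
    · rw [if_neg haj]
  rw [if_pos hab]
  simp [edgeVec, hab.ne, hab.ne']

lemma lapOf_symm_apply (w : m → m → ℝ) (a b : m) : lapOf w a b = lapOf w b a := by
  rw [lapOf_apply, lapOf_apply]
  refine Finset.sum_congr rfl fun i _ => Finset.sum_congr rfl fun j _ => ?_
  by_cases h : i < j
  · simp only [if_pos h]; ring
  · simp [h]

lemma lapOf_offdiag (w : m → m → ℝ) (hs : ∀ i j, w i j = w j i) {a b : m}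
    (hab : a ≠ b) : lapOf w a b = -w a b := by
  rcases hab.lt_or_gt with h | h
  · exact lapOf_offdiag_lt w h
  · rw [lapOf_symm_apply, lapOf_offdiag_lt w h, hs a b]


lemma msum_mulVec {ι : Type*} (s : Finset ι) (A : ι → Matrix m m ℝ) (x : m → ℝ) :
    (∑ i ∈ s, A i) *ᵥ x = ∑ i ∈ s, (A i *ᵥ x) := by
  ext k
  simp only [Matrix.mulVec, dotProduct, Matrix.sum_apply, Finset.sum_apply,
    Finset.sum_mul]
  exact Finset.sum_comm

lemma mdot_sum {ι : Type*} (s : Finset ι) (v : ι → (m → ℝ)) (x : m → ℝ) :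
    x ⬝ᵥ (∑ i ∈ s, v i) = ∑ i ∈ s, x ⬝ᵥ v i := by
  simp only [dotProduct, Finset.sum_apply, Finset.mul_sum]
  exact Finset.sum_comm

lemma vecMulVec_mulVec' (u x : m → ℝ) :
    Matrix.vecMulVec u u *ᵥ x = (u ⬝ᵥ x) • u := by
  ext k
  simp only [Matrix.mulVec, dotProduct, Matrix.vecMulVec_apply, Pi.smul_apply,
    smul_eq_mul, Finset.sum_mul]
  exact Finset.sum_congr rfl fun l _ => by ring

lemma dot_edgeVec (i j : m) (x : m → ℝ) :
    x ⬝ᵥ edgeVec i j = x i - x j := by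
  rw [dotProduct_comm]; exact edgeVec_dot i j x

lemma lapOf_quad (w : m → m → ℝ) (x : m → ℝ) :
    x ⬝ᵥ (lapOf w *ᵥ x) = ∑ i, ∑ j, (if i < j then w i j * (x i - x j)^2 else 0) := by
  rw [lapOf, msum_mulVec, mdot_sum]
  refine Finset.sum_congr rfl fun i _ => ?_
  rw [msum_mulVec, mdot_sum]
  refine Finset.sum_congr rfl fun j _ => ?_
  by_cases h : i < j
  · rw [if_pos h, if_pos h, Matrix.smul_mulVec, vecMulVec_mulVec',
      dotProduct_smul, dotProduct_smul, smul_eq_mul, smul_eq_mul]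
    simp only [dot_edgeVec, edgeVec_dot]
    ring
  · rw [if_neg h, if_neg h, Matrix.zero_mulVec, dotProduct_zero]

end Helpers

lemma mInv_mulVec_nonneg {β : Type*} [Fintype β] [DecidableEq β]
    (D : Matrix β β ℝ) (hD : D.PosDef) (hoff : ∀ i j, i ≠ j → D i j ≤ 0)
    (b : β → ℝ) (hb : ∀ i, 0 ≤ b i) (i : β) : 0 ≤ (D⁻¹ *ᵥ b) i := by
  set x := D⁻¹ *ᵥ b with hxdef
  have hDx : D *ᵥ x = b := by
    rw [hxdef, Matrix.mulVec_mulVec, Matrix.mul_nonsing_inv D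
      ((Matrix.isUnit_iff_isUnit_det D).mp hD.isUnit), Matrix.one_mulVec]
  set p : β → ℝ := fun k => max (x k) 0 with hpdef
  set z : β → ℝ := fun k => max (-x k) 0 with hzdef
  have hx : ∀ k, x k = p k - z k := fun k =>
    (max_zero_sub_max_neg_zero_eq_self (x k)).symm
  have hz0 : ∀ k, 0 ≤ z k := fun k => le_max_right _ _
  have hp0 : ∀ k, 0 ≤ p k := fun k => le_max_right _ _
  have hzp : ∀ k, z k * p k = 0 := by
    intro k
    rcases le_or_gt (x k) 0 with h | h
    · have : p k = 0 := max_eq_right h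
      rw [this, mul_zero]
    · have : z k = 0 := max_eq_right (by linarith)
      rw [this, zero_mul]
  have hzvec : z = p - x := by
    funext k
    rw [Pi.sub_apply, hx k]
    ring
  have h1 : z ⬝ᵥ (D *ᵥ z) = z ⬝ᵥ (D *ᵥ p) - z ⬝ᵥ b := by
    rw [hzvec, Matrix.mulVec_sub, dotProduct_sub, hDx]
  have h2 : z ⬝ᵥ (D *ᵥ p) ≤ 0 := by
    rw [dotProduct]
    refine Finset.sum_nonpos fun k _ => ?_
    rw [Matrix.mulVec, dotProduct, Finset.mul_sum]
    refine Finset.sum_nonpos fun l _ => ?_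
    rcases eq_or_ne k l with rfl | hkl
    · have : z k * (D k k * p k) = D k k * (z k * p k) := by ring
      rw [this, hzp, mul_zero]
    · have hDkl : D k l * p l ≤ 0 :=
        mul_nonpos_iff.mpr (Or.inr ⟨hoff k l hkl, hp0 l⟩)
      exact mul_nonpos_iff.mpr (Or.inl ⟨hz0 k, hDkl⟩)
  have h3 : 0 ≤ z ⬝ᵥ b := Finset.sum_nonneg fun k _ => mul_nonneg (hz0 k) (hb k)
  have hzero : z = 0 := by
    by_contra hne
    have h4 := hD.dotProduct_mulVec_pos hne
    have h5 : star z = z := funext fun k => star_trivial _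
    rw [h5] at h4
    linarith
  have : x i = p i := by rw [hx i, show z i = 0 from congrFun hzero i, sub_zero]
  rw [this]; exact hp0 i

lemma isLaplacian_of {m : Type*} [Fintype m] [LinearOrder m] (M : Matrix m m ℝ)
    (hsym : ∀ i j, M i j = M j i) (hoff : ∀ i j, i ≠ j → M i j ≤ 0)
    (hrow : ∀ i, ∑ j, M i j = 0) : IsLaplacian M := by
  set u : m → m → ℝ := fun i j => if i = j then 0 else -M i j with hu
  have hu0 : ∀ i j, 0 ≤ u i j := by
    intro i j
    rcases eq_or_ne i j with rfl | h
    · simp [hu]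
    · simp only [hu, if_neg h]
      linarith [hoff i j h]
  have husym : ∀ i j, u i j = u j i := by
    intro i j
    rcases eq_or_ne i j with rfl | h
    · rfl
    · simp only [hu, if_neg h, if_neg h.symm, hsym i j]
  refine ⟨u, hu0, husym, ?_⟩
  have : M = lapOf u := by
    ext a b
    rcases eq_or_ne a b with rfl | hab
    · have hsum := lapOf_rowSum u a
      rw [← Finset.add_sum_erase Finset.univ _ (Finset.mem_univ a)] at hsum
      have he : ∑ b ∈ Finset.univ.erase a, lapOf u a b
          = ∑ b ∈ Finset.univ.erase a, M a b := by
        refine Finset.sum_congr rfl fun b hb => ?_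
        have hba : b ≠ a := (Finset.mem_erase.mp hb).1
        rw [lapOf_offdiag u husym (Ne.symm hba), hu]
        simp [Ne.symm hba]
      have he2 : ∑ b ∈ Finset.univ.erase a, M a b = -M a a := by
        have := hrow a
        rw [← Finset.add_sum_erase Finset.univ _ (Finset.mem_univ a)] at this
        linarith
      rw [he, he2] at hsum
      linarith
    · rw [lapOf_offdiag u husym hab, hu]
      simp [hab]
  exact this


/-- For a connected positive-weight Laplacian on `n ≥ 2` vertices and a vertex subset
`C` whose complement is nonempty and proper, the principal submatrix on the complement
is invertible (indeed positive definite), and the Schur complement onto `C` is again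
a weighted graph Laplacian. -/
theorem schur_isLaplacian {n : ℕ} (hn : 2 ≤ n) (w : Fin n → Fin n → ℝ)
    (hw0 : ∀ i j, 0 ≤ w i j) (hwsymm : ∀ i j, w i j = w j i)
    (hconn : ∀ i j : Fin n, Relation.ReflTransGen (fun a b => 0 < w a b) i j)
    (L : Matrix (Fin n) (Fin n) ℝ)
    (hL : L = ∑ i, ∑ j, if i < j then
      w i j • Matrix.vecMulVec (edgeVec i j) (edgeVec i j) else 0)
    (C : Finset (Fin n)) (hCc : Cᶜ.Nonempty) (hC : C.Nonempty) :
    IsUnit (L.submatrix (fun i : {k : Fin n // k ∉ C} => (i : Fin n))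
        (fun j : {k : Fin n // k ∉ C} => (j : Fin n))) ∧
    (L.submatrix (fun i : {k : Fin n // k ∉ C} => (i : Fin n))
        (fun j : {k : Fin n // k ∉ C} => (j : Fin n))).PosDef ∧
    IsLaplacian
      (L.submatrix (fun i : {k : Fin n // k ∈ C} => (i : Fin n))
          (fun j : {k : Fin n // k ∈ C} => (j : Fin n))
        - L.submatrix (fun i : {k : Fin n // k ∈ C} => (i : Fin n))
            (fun j : {k : Fin n // k ∉ C} => (j : Fin n))
          * (L.submatrix (fun i : {k : Fin n // k ∉ C} => (i : Fin n))
              (fun j : {k : Fin n // k ∉ C} => (j : Fin n)))⁻¹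
          * L.submatrix (fun i : {k : Fin n // k ∉ C} => (i : Fin n))
              (fun j : {k : Fin n // k ∈ C} => (j : Fin n))) := by
  classical
  have hL' : L = lapOf w := by
    rw [hL, lapOf]
  have hLsym : ∀ i j, L i j = L j i := by
    intro i j; rw [hL']; exact lapOf_symm_apply w i j
  have hLoff : ∀ i j : Fin n, i ≠ j → L i j ≤ 0 := by
    intro i j hij
    rw [hL', lapOf_offdiag w hwsymm hij]
    linarith [hw0 i j]
  have hLrow : ∀ i, ∑ j, L i j = 0 := by
    intro i; rw [hL']; exact lapOf_rowSum w i
  have hsplit : ∀ f : Fin n → ℝ, ∑ k, f k =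
      (∑ k : {k : Fin n // k ∈ C}, f ↑k) + ∑ k : {k : Fin n // k ∉ C}, f ↑k := by
    intro f
    rw [← Finset.sum_add_sum_compl C f]
    congr 1
    · exact Finset.sum_subtype C (fun x => Iff.rfl) f
    · exact Finset.sum_subtype Cᶜ (fun x => Finset.mem_compl) f
  set D := L.submatrix (fun i : {k : Fin n // k ∉ C} => (i : Fin n))
      (fun j : {k : Fin n // k ∉ C} => (j : Fin n)) with hDdef
  have hD : D.PosDef := by
    refine Matrix.PosDef.of_dotProduct_mulVec_pos ?_ ?_
    · ext i j
      simp only [Matrix.conjTranspose_apply, Matrix.submatrix_apply, star_trivial,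
        hDdef]
      exact hLsym _ _
    · intro y hy
      have hstar : star y = y := funext fun k => star_trivial _
      rw [hstar]
      set x : Fin n → ℝ := fun k => if h : k ∉ C then y ⟨k, h⟩ else 0 with hxdef
      have hx0 : ∀ k, k ∈ C → x k = 0 := by
        intro k hk; simp [hxdef, hk]
      have hxy : ∀ i : {k : Fin n // k ∉ C}, x ↑i = y i := by
        intro i; simp [hxdef, i.2]
      have hLx : ∀ i : {k : Fin n // k ∉ C}, (L *ᵥ x) ↑i = (D *ᵥ y) i := by
        intro i
        show (∑ j, L ↑i j * x j) = ∑ j : {k : Fin n // k ∉ C}, D i j * y j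
        rw [hsplit fun j => L ↑i j * x j]
        rw [Finset.sum_eq_zero (fun j _ => by rw [hx0 _ j.2, mul_zero]), zero_add]
        exact Finset.sum_congr rfl fun j _ => by rw [hxy j]; rfl
      have hquad : y ⬝ᵥ (D *ᵥ y) = x ⬝ᵥ (L *ᵥ x) := by
        show (∑ i : {k : Fin n // k ∉ C}, y i * (D *ᵥ y) i) = ∑ k, x k * (L *ᵥ x) k
        rw [hsplit fun k => x k * (L *ᵥ x) k]
        have hz : (∑ k : {k : Fin n // k ∈ C}, x ↑k * (L *ᵥ x) ↑k) = 0 :=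
          Finset.sum_eq_zero fun i _ => by rw [hx0 _ i.2, zero_mul]
        rw [hz, zero_add]
        exact (Finset.sum_congr rfl fun i _ => by rw [hxy i, hLx i]).symm
      rw [hquad, hL', lapOf_quad]
      have hnn : ∀ i ∈ (univ : Finset (Fin n)),
          0 ≤ ∑ j, (if i < j then w i j * (x i - x j)^2 else 0) := by
        intro i _
        refine Finset.sum_nonneg fun j _ => ?_
        by_cases h : i < j
        · rw [if_pos h]; exact mul_nonneg (hw0 i j) (sq_nonneg _)
        · rw [if_neg h]
      have hge : 0 ≤ ∑ i, ∑ j, (if i < j then w i j * (x i - x j)^2 else 0) :=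
        Finset.sum_nonneg hnn
      rcases lt_or_eq_of_le hge with h | h
      · exact h
      · exfalso
        have hterm : ∀ i j : Fin n,
            (if i < j then w i j * (x i - x j)^2 else 0) = 0 := by
          intro i j
          have h1 := (Finset.sum_eq_zero_iff_of_nonneg hnn).mp h.symm i
            (Finset.mem_univ i)
          have hnn2 : ∀ j ∈ (univ : Finset (Fin n)),
              0 ≤ (if i < j then w i j * (x i - x j)^2 else 0) := by
            intro j _
            by_cases hij : i < j
            · rw [if_pos hij]; exact mul_nonneg (hw0 i j) (sq_nonneg _)
            · rw [if_neg hij]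
          exact (Finset.sum_eq_zero_iff_of_nonneg hnn2).mp h1 j (Finset.mem_univ j)
        have hedge : ∀ a b : Fin n, 0 < w a b → x a = x b := by
          intro a b hab
          rcases lt_trichotomy a b with h' | h' | h'
          · have ht := hterm a b
            rw [if_pos h'] at ht
            have h4 : x a - x b = 0 := by
              rcases mul_eq_zero.mp ht with h3 | h3
              · exact absurd h3 (ne_of_gt hab)
              · exact pow_eq_zero_iff (by norm_num : (2:ℕ) ≠ 0) |>.mp h3
            linarith
          · exact congrArg x h'
          · have ht := hterm b a
            rw [if_pos h'] at ht
            rw [hwsymm a b] at hab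
            have h4 : x b - x a = 0 := by
              rcases mul_eq_zero.mp ht with h3 | h3
              · exact absurd h3 (ne_of_gt hab)
              · exact pow_eq_zero_iff (by norm_num : (2:ℕ) ≠ 0) |>.mp h3
            linarith
        obtain ⟨c, hc⟩ := hC
        have hwalk : ∀ a b : Fin n,
            Relation.ReflTransGen (fun a b => 0 < w a b) a b → x a = x b := by
          intro a b hab
          induction hab with
          | refl => rfl
          | tail _ hbc ih => exact ih.trans (hedge _ _ hbc)
        have hxall : ∀ k, x k = 0 := by
          intro k
          rw [hwalk k c (hconn k c), hx0 c hc]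
        exact hy (funext fun i => by rw [← hxy i, hxall ↑i]; rfl)
  refine ⟨hD.isUnit, hD, ?_⟩
  set A := L.submatrix (fun i : {k : Fin n // k ∈ C} => (i : Fin n))
      (fun j : {k : Fin n // k ∈ C} => (j : Fin n)) with hA
  set B := L.submatrix (fun i : {k : Fin n // k ∈ C} => (i : Fin n))
      (fun j : {k : Fin n // k ∉ C} => (j : Fin n)) with hB
  set Bt := L.submatrix (fun i : {k : Fin n // k ∉ C} => (i : Fin n))
      (fun j : {k : Fin n // k ∈ C} => (j : Fin n)) with hBt
  have hcne : ∀ (i : {k : Fin n // k ∈ C}) (j : {k : Fin n // k ∉ C}),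
      (↑i : Fin n) ≠ ↑j := fun i j h => j.2 (h ▸ i.2)
  have hDoff : ∀ i j : {k : Fin n // k ∉ C}, i ≠ j → D i j ≤ 0 := fun i j hij =>
    hLoff _ _ (fun h => hij (Subtype.ext h))
  have hDinv_nn : ∀ i j : {k : Fin n // k ∉ C}, 0 ≤ D⁻¹ i j := by
    intro i j
    have h := mInv_mulVec_nonneg D hD hDoff (fun k => if k = j then 1 else 0)
      (fun k => by by_cases h : k = j <;> simp [h]) i
    simpa [Matrix.mulVec, dotProduct, mul_ite, mul_one, mul_zero,
      Finset.sum_ite_eq'] using h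
  have hDdetu : IsUnit D.det := (Matrix.isUnit_iff_isUnit_det D).mp hD.isUnit
  have hBtT : Bᵀ = Bt := by
    ext i j
    simp only [hB, hBt, Matrix.transpose_apply, Matrix.submatrix_apply]
    exact hLsym _ _
  have hBtT2 : Btᵀ = B := by rw [← hBtT, Matrix.transpose_transpose]
  have hAT : Aᵀ = A := by
    ext i j
    simp only [hA, Matrix.transpose_apply, Matrix.submatrix_apply]
    exact hLsym _ _
  have hDT : Dᵀ = D := by
    ext i j
    simp only [hDdef, Matrix.transpose_apply, Matrix.submatrix_apply]
    exact hLsym _ _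
  have hDiT : (D⁻¹)ᵀ = D⁻¹ := by rw [Matrix.transpose_nonsing_inv, hDT]
  set S := A - B * D⁻¹ * Bt with hS
  have hST : Sᵀ = S := by
    rw [hS, Matrix.transpose_sub, hAT, Matrix.transpose_mul, Matrix.transpose_mul,
      hDiT, hBtT2, hBtT, Matrix.mul_assoc]
  have hSsym : ∀ i j, S i j = S j i := by
    intro i j
    nth_rewrite 1 [← hST]
    rfl
  have hSrow : ∀ i, ∑ j, S i j = 0 := by
    have h1 : A *ᵥ (fun _ => (1:ℝ)) + B *ᵥ (fun _ => (1:ℝ)) = 0 := by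
      funext i
      have hr := hLrow ↑i
      rw [hsplit fun j => L ↑i j] at hr
      show (∑ j : {k : Fin n // k ∈ C}, A i j * 1)
        + ∑ j : {k : Fin n // k ∉ C}, B i j * 1 = 0
      simp only [hA, hB, Matrix.submatrix_apply, mul_one]
      exact hr
    have h2 : Bt *ᵥ (fun _ => (1:ℝ)) = -(D *ᵥ (fun _ => (1:ℝ))) := by
      funext i
      have hr := hLrow ↑i
      rw [hsplit fun j => L ↑i j] at hr
      show (∑ j : {k : Fin n // k ∈ C}, Bt i j * 1)
        = -(∑ j : {k : Fin n // k ∉ C}, D i j * 1)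
      simp only [hBt, hDdef, Matrix.submatrix_apply, mul_one]
      linarith
    have h3 : S *ᵥ (fun _ => (1:ℝ)) = 0 := by
      rw [hS, Matrix.sub_mulVec, ← Matrix.mulVec_mulVec, ← Matrix.mulVec_mulVec,
        h2, Matrix.mulVec_neg, Matrix.mulVec_mulVec,
        Matrix.nonsing_inv_mul D hDdetu, Matrix.one_mulVec, Matrix.mulVec_neg,
        sub_neg_eq_add, h1]
    intro i
    have h4 := congrFun h3 i
    simpa [Matrix.mulVec, dotProduct, mul_one] using h4
  have hSoff : ∀ i j, i ≠ j → S i j ≤ 0 := by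
    intro i j hij
    have hAij : A i j ≤ 0 := by
      simp only [hA, Matrix.submatrix_apply]
      exact hLoff _ _ (fun h => hij (Subtype.ext h))
    have hprod : 0 ≤ (B * D⁻¹ * Bt) i j := by
      rw [Matrix.mul_apply]
      refine Finset.sum_nonneg fun k _ => ?_
      have h1 : (B * D⁻¹) i k ≤ 0 := by
        rw [Matrix.mul_apply]
        refine Finset.sum_nonpos fun l _ => ?_
        have hBil : B i l ≤ 0 := by
          simp only [hB, Matrix.submatrix_apply]
          exact hLoff _ _ (hcne i l)
        exact mul_nonpos_iff.mpr (Or.inr ⟨hBil, hDinv_nn l k⟩)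
      have h2 : Bt k j ≤ 0 := by
        simp only [hBt, Matrix.submatrix_apply]
        exact hLoff _ _ (Ne.symm (hcne j k))
      nlinarith [h1, h2]
    have hSv : S i j = A i j - (B * D⁻¹ * Bt) i j := by rw [hS]; rfl
    linarith
  exact isLaplacian_of S hSsym hSoff hSrow
end

section
/- Let a ∈ ℝⁿ have nonnegative entries with a(1) = 0, let d = Σ_j a(j) > 0, and for each index i define the elimination star S_i = Σ_{j>i} (a(j)·a(i)/d) (e_i − e_j)(e_i − e_j)ᵀ. Then each S_i is a weighted graph Laplacian, and Σ_i S_i = diag(a) − (1/d) a aᵀ; that is, the elimination stars sum to the elimination clique created by eliminating vertex 1. -/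
open Matrix Finset

lemma elimInnerSum {n : ℕ} (a : Fin (n+1) → ℝ) (d : ℝ) (hd : d = ∑ j, a j)
    (x y : Fin (n+1)) (i : Fin (n+1)) :
    ∑ j, (a j * a i / d) * (edgeVec i j x * edgeVec i j y)
    = (a i / d) * (d * ((if x = i then 1 else 0) * (if y = i then 1 else 0))
        - a y * (if x = i then 1 else 0) - a x * (if y = i then 1 else 0)
        + (if x = y then a x else 0)) := by
  simp only [edgeVec]
  rw [Finset.sum_congr rfl (fun j _ => show _ = (a i / d) *
      (a j * ((if x = i then 1 else 0) * (if y = i then 1 else 0))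
       - (if y = j then a j else 0) * (if x = i then 1 else 0)
       - (if x = j then a j else 0) * (if y = i then 1 else 0)
       + (if x = j then (if y = j then a j else 0) else 0)) by
    split_ifs <;> simp_all <;> ring)]
  rw [← Finset.mul_sum]
  congr 1
  simp only [Finset.sum_add_distrib, Finset.sum_sub_distrib, ← Finset.sum_mul,
    ← Finset.mul_sum, Finset.sum_ite_eq, Finset.mem_univ, if_true]
  rw [← hd]
  have : (if y = x then a x else 0) = (if x = y then a x else 0) := by
    rcases eq_or_ne x y with h | h
    · subst h; rfl
    · simp [h, Ne.symm h]
  rw [this]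

lemma elimTotalSum {n : ℕ} (a : Fin (n+1) → ℝ) (d : ℝ) (hd : d = ∑ j, a j) (hdne : d ≠ 0)
    (x y : Fin (n+1)) :
    ∑ i, ∑ j, (a j * a i / d) * (edgeVec i j x * edgeVec i j y)
    = 2 * ((if x = y then a x else 0) - a x * a y / d) := by
  rw [Finset.sum_congr rfl (fun i _ => elimInnerSum a d hd x y i)]
  rw [Finset.sum_congr rfl (fun i _ => show _ = (1 / d) *
      (d * (if x = i then (if y = i then a i else 0) else 0)
       - a y * (if x = i then a i else 0) - a x * (if y = i then a i else 0)
       + (if x = y then a x else 0) * a i) by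
    split_ifs <;> ring)]
  rw [← Finset.mul_sum]
  simp only [Finset.sum_add_distrib, Finset.sum_sub_distrib, ← Finset.sum_mul,
    ← Finset.mul_sum, Finset.sum_ite_eq, Finset.mem_univ, if_true]
  rw [← hd]
  have : (if y = x then a x else 0) = (if x = y then a x else 0) := by
    rcases eq_or_ne x y with h | h
    · subst h; rfl
    · simp [h, Ne.symm h]
  rw [this]
  field_simp
  ring

/-- Each elimination star `S_i = Σ_{j>i} (a(j)a(i)/d)(e_i - e_j)(e_i - e_j)ᵀ` is a
weighted graph Laplacian, and the elimination stars sum to the elimination clique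
`diag(a) - (1/d) a aᵀ`. -/
theorem elimination_stars_sum_to_clique {n : ℕ} (a : Fin (n + 1) → ℝ)
    (ha : ∀ i, 0 ≤ a i) (ha0 : a 0 = 0)
    (d : ℝ) (hd : d = ∑ j, a j) (hdpos : 0 < d)
    (S : Fin (n + 1) → Matrix (Fin (n + 1)) (Fin (n + 1)) ℝ)
    (hS : ∀ i, S i = ∑ j, if i < j then
      (a j * a i / d) • Matrix.vecMulVec (edgeVec i j) (edgeVec i j) else 0) :
    (∀ i, IsLaplacian (S i)) ∧
    ∑ i, S i = Matrix.diagonal a - (1 / d) • Matrix.vecMulVec a a := by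
  have hdne : d ≠ 0 := ne_of_gt hdpos
  constructor
  · intro i
    refine ⟨fun p q => if p = i ∧ i < q then a q * a i / d
        else if q = i ∧ i < p then a p * a i / d else 0, ?_, ?_, ?_⟩
    · intro p q
      dsimp only
      split_ifs <;>
        first
        | exact div_nonneg (mul_nonneg (ha _) (ha _)) hdpos.le
        | exact le_refl 0
    · intro p q
      dsimp only
      split_ifs with h1 h2 <;> try rfl
      exact absurd (h2.1 ▸ h1.2) (lt_irrefl i)
    · rw [hS i]; symm
      rw [Finset.sum_eq_single i (fun p _ hp => Finset.sum_eq_zero fun q _ => by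
          dsimp only
          split_ifs with hpq h1 h2
          · exact (hp h1.1).elim
          · exact absurd (h2.1 ▸ hpq) (not_lt.2 h2.2.le)
          · rw [zero_smul]
          · rfl)
        (fun h => absurd (Finset.mem_univ i) h)]
      refine Finset.sum_congr rfl fun q _ => ?_
      dsimp only
      rcases lt_or_ge i q with h | h
      · rw [if_pos h, if_pos h, if_pos (⟨rfl, h⟩ : i = i ∧ i < q)]
      · rw [if_neg (not_lt.2 h), if_neg (not_lt.2 h)]
  · ext x y
    set F : Fin (n+1) → Fin (n+1) → ℝ :=
      fun i j => (a j * a i / d) * (edgeVec i j x * edgeVec i j y) with hF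
    have hsym : ∀ i j, F i j = F j i := by
      intro i j; simp only [hF, edgeVec]; ring
    have hzero : ∀ i, F i i = 0 := by
      intro i; simp [hF, edgeVec]
    have hentry : (∑ i, S i) x y = ∑ i, ∑ j, (if i < j then F i j else 0) := by
      simp only [Matrix.sum_apply, hS]
      refine Finset.sum_congr rfl fun i _ => Finset.sum_congr rfl fun j _ => ?_
      rw [show ((if i < j then (a j * a i / d) • Matrix.vecMulVec (edgeVec i j) (edgeVec i j)
          else 0) : Matrix (Fin (n+1)) (Fin (n+1)) ℝ) x y
        = if i < j then ((a j * a i / d) • Matrix.vecMulVec (edgeVec i j) (edgeVec i j)) x y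
          else (0 : Matrix (Fin (n+1)) (Fin (n+1)) ℝ) x y from
        apply_ite (fun M : Matrix (Fin (n+1)) (Fin (n+1)) ℝ => M x y) _ _ _]
      simp [Matrix.vecMulVec_apply, hF, mul_comm, mul_assoc, mul_left_comm]
    have hswap : (∑ i, ∑ j, if i < j then F i j else 0)
        = ∑ i, ∑ j, if j < i then F i j else 0 := by
      rw [Finset.sum_comm]
      exact Finset.sum_congr rfl fun j _ => Finset.sum_congr rfl fun i _ => by
        rw [hsym]
    have h2 : (∑ i, ∑ j, if i < j then F i j else 0) * 2 = ∑ i, ∑ j, F i j := by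
      rw [mul_two]
      nth_rewrite 2 [hswap]
      rw [← Finset.sum_add_distrib]
      refine Finset.sum_congr rfl fun i _ => ?_
      rw [← Finset.sum_add_distrib]
      refine Finset.sum_congr rfl fun j _ => ?_
      rcases lt_trichotomy i j with h | h | h
      · simp [h, not_lt.2 h.le]
      · simp [h, hzero]
      · simp [h, not_lt.2 h.le]
    have htot : ∑ i, ∑ j, F i j = 2 * ((if x = y then a x else 0) - a x * a y / d) :=
      elimTotalSum a d hd hdne x y
    have hrhs : (Matrix.diagonal a - (1 / d) • Matrix.vecMulVec a a) x y
        = (if x = y then a x else 0) - a x * a y / d := by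
      simp [Matrix.sub_apply, Matrix.diagonal_apply, Matrix.vecMulVec_apply,
        Matrix.smul_apply]
      ring
    rw [hentry, hrhs]
    have := h2.trans htot
    linarith
end

section
/- For all integers n ≥ 2 and all reals m ≥ 1, the sum Σ_{i=1}^{n−1} 2m/(n−i) is at most 2m·(1 + log(n−1)), where log denotes the natural logarithm. Consequently, if an approximate elimination process on a graph with m edges never increases the number of edges and each elimination of the i-th vertex produces a column with at most 2m/(n−i) nonzero entries (a constant multiple of the average degree in the remaining graph on n−i+1 vertices), then the total number of nonzeros in the output lower-triangular factor is O(m log m). -/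
open Finset

/-- The fill-in bound: for `n ≥ 2` and `m ≥ 1`,
`Σ_{i=1}^{n-1} 2m/(n-i) ≤ 2m(1 + log(n-1))`,
which yields the `O(m log m)` bound on the nonzeros of the approximate factor. -/
theorem fillin_harmonic_bound (n : ℕ) (hn : 2 ≤ n) (m : ℝ) (hm : 1 ≤ m) :
    ∑ i ∈ Finset.Icc 1 (n - 1), 2 * m / ((n : ℝ) - (i : ℝ))
      ≤ 2 * m * (1 + Real.log ((n : ℝ) - 1)) := by
  have hsum : ∑ i ∈ Finset.Icc 1 (n - 1), (1 / ((n : ℝ) - (i : ℝ)))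
      = (harmonic (n - 1) : ℝ) := by
    rw [show (harmonic (n-1) : ℝ) = ∑ k ∈ Finset.range (n-1), ((k+1 : ℕ) : ℝ)⁻¹ by
      simp [harmonic]]
    refine Finset.sum_nbij' (fun i => n - 1 - i) (fun k => n - 1 - k) ?_ ?_ ?_ ?_ ?_
    · intro i hi; simp only [Finset.mem_Icc] at hi; simp only [Finset.mem_range]; omega
    · intro k hk; simp only [Finset.mem_range] at hk; simp only [Finset.mem_Icc]; omega
    · intro i hi; simp only [Finset.mem_Icc] at hi; omega
    · intro k hk; simp only [Finset.mem_range] at hk; omega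
    · intro i hi
      simp only [Finset.mem_Icc] at hi
      have h1 : (n : ℝ) - (i : ℝ) = ((n - i : ℕ) : ℝ) := by
        rw [Nat.cast_sub (by omega)]
      have h2 : n - 1 - i + 1 = n - i := by omega
      rw [h1, h2, one_div]
  have hlog : (harmonic (n - 1) : ℝ) ≤ 1 + Real.log ((n : ℝ) - 1) := by
    have := harmonic_le_one_add_log (n - 1)
    rwa [Nat.cast_sub (by omega), Nat.cast_one] at this
  calc ∑ i ∈ Finset.Icc 1 (n - 1), 2 * m / ((n : ℝ) - (i : ℝ))
      = 2 * m * ∑ i ∈ Finset.Icc 1 (n - 1), (1 / ((n : ℝ) - (i : ℝ))) := by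
        rw [Finset.mul_sum]; exact Finset.sum_congr rfl fun i _ => by ring
    _ = 2 * m * (harmonic (n - 1) : ℝ) := by rw [hsum]
    _ ≤ 2 * m * (1 + Real.log ((n : ℝ) - 1)) := by
        apply mul_le_mul_of_nonneg_left hlog; linarith
end

section
/- Let n ≥ 2, let d > 0, w > 0, a ∈ ℝ^{n−2}, and let θ = w/d. Consider the block matrices (indexed so the first coordinate is the vertex being eliminated, the second is the current neighbor, and the remaining n−2 coordinates are the other vertices): X = [[d, −w, −aᵀ], [−w, w, 0ᵀ], [−a, 0, diag(a)]] + E, where E is any n×n matrix supported on the lower-right (n−1)×(n−1) block, and let R = I + (θ/(1−θ))(e_1 − e_2)e_1ᵀ (assuming θ < 1). Then R · Y · Rᵀ = X, where Y = [[d(1−θ)², 0, −(1−θ)aᵀ], [0, w − w²/d, −(w/d)aᵀ], [−(1−θ)a, −(w/d)a, diag(a)]] + E. That is, the single row operation R exactly eliminates the entry corresponding to the edge of weight w, replacing it with the entries of the corresponding elimination star while rescaling the eliminated column by (1−θ). -/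
/-!
Write `R = 1 + c • u e₀ᵀ` with `u = e₀ - e₁` and `c = θ / (1 - θ)`. Expanding the product,
`R Y Rᵀ = Y + c (u rᵀ + k uᵀ) + c² Y₀₀ u uᵀ`, where `r` and `k` are the row and the column of `Y`
at index `0`. Since `E` vanishes on that row and column it passes through unchanged, and on the
block part the identity `c (1 - θ) = θ` turns the correction terms into exactly `X - Y`.
-/

open Matrix

section RowOperation

variable {m α : Type*} [Fintype m] [DecidableEq m] [CommRing α]

theorem one_add_smul_vecMulVec_mul_mul_transpose (c : α) (u v : m → α) (M : Matrix m m α) :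
    (1 + c • vecMulVec u v) * M * (1 + c • vecMulVec u v)ᵀ =
      M + c • vecMulVec u (v ᵥ* M) + c • vecMulVec (M *ᵥ v) u
        + (c ^ 2 * (v ᵥ* M ⬝ᵥ v)) • vecMulVec u u := by
  simp only [transpose_add, transpose_one, transpose_smul, transpose_vecMulVec, add_mul, mul_add,
    one_mul, mul_one, Matrix.smul_mul, Matrix.mul_smul, vecMulVec_mul, mul_vecMulVec, smul_mulVec,
    vecMulVec_mulVec, op_smul_eq_smul, smul_vecMulVec]
  module

theorem one_add_smul_vecMulVec_single_mul_mul_transpose (c : α) (u : m → α) (i : m)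
    (M : Matrix m m α) :
    (1 + c • vecMulVec u (Pi.single i 1)) * M * (1 + c • vecMulVec u (Pi.single i 1))ᵀ =
      M + c • vecMulVec u (M.row i) + c • vecMulVec (M.col i) u
        + (c ^ 2 * M i i) • vecMulVec u u := by
  rw [one_add_smul_vecMulVec_mul_mul_transpose, single_one_vecMul, mulVec_single_one,
    dotProduct_single_one, row_apply]

theorem one_add_smul_vecMulVec_single_mul_mul_transpose_of_row_eq_zero_of_col_eq_zero
    (c : α) (u : m → α) {i : m} {M : Matrix m m α} (hrow : M.row i = 0) (hcol : M.col i = 0) :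
    (1 + c • vecMulVec u (Pi.single i 1)) * M * (1 + c • vecMulVec u (Pi.single i 1))ᵀ = M := by
  have hii : M i i = 0 := congr_fun hrow i
  rw [one_add_smul_vecMulVec_single_mul_mul_transpose, hrow, hcol, hii]
  simp

end RowOperation

section EdgeElimination

variable {n : ℕ}

noncomputable def starMatrix (d w : ℝ) (a : Fin n → ℝ) :
    Matrix (Fin 2 ⊕ Fin n) (Fin 2 ⊕ Fin n) ℝ :=
  fromBlocks !![d, -w; -w, w]
    (of fun i l => if i = 0 then -a l else 0)
    (of fun k j => if j = 0 then -a k else 0)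
    (diagonal a)

noncomputable def edgeEliminatedStarMatrix (d w θ : ℝ) (a : Fin n → ℝ) :
    Matrix (Fin 2 ⊕ Fin n) (Fin 2 ⊕ Fin n) ℝ :=
  fromBlocks !![d * (1 - θ) ^ 2, 0; 0, w - w ^ 2 / d]
    (of fun i l => if i = 0 then -((1 - θ) * a l) else -(w / d * a l))
    (of fun k j => if j = 0 then -((1 - θ) * a k) else -(w / d * a k))
    (diagonal a)

variable (n) in
noncomputable def edgeEliminationRowOp (θ : ℝ) : Matrix (Fin 2 ⊕ Fin n) (Fin 2 ⊕ Fin n) ℝ :=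
  1 + (θ / (1 - θ)) •
    vecMulVec (Pi.single (Sum.inl 0) 1 - Pi.single (Sum.inl 1) 1) (Pi.single (Sum.inl 0) 1)

theorem edgeEliminationRowOp_mul_edgeEliminatedStarMatrix_mul_transpose {d w θ : ℝ}
    (a : Fin n → ℝ) (hd : d ≠ 0) (hθ : θ = w / d) (hθ1 : θ ≠ 1) :
    edgeEliminationRowOp n θ * edgeEliminatedStarMatrix d w θ a * (edgeEliminationRowOp n θ)ᵀ =
      starMatrix d w a := by
  rw [edgeEliminationRowOp, one_add_smul_vecMulVec_single_mul_mul_transpose]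
  subst hθ
  have hdw : d - w ≠ 0 := fun h => hθ1 (by rw [← sub_eq_zero.mp h, div_self hd])
  ext (i | k) (j | l)
  · fin_cases i <;> fin_cases j <;>
      simp [starMatrix, edgeEliminatedStarMatrix, vecMulVec_apply] <;> field_simp [hdw] <;> ring
  · fin_cases i <;>
      simp [starMatrix, edgeEliminatedStarMatrix, vecMulVec_apply] <;> field_simp [hdw] <;> ring
  · fin_cases j <;>
      simp [starMatrix, edgeEliminatedStarMatrix, vecMulVec_apply] <;> field_simp [hdw] <;> ring
  · simp [starMatrix, edgeEliminatedStarMatrix, vecMulVec_apply]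

end EdgeElimination

theorem single_edge_elimination_general {n : ℕ} (d w : ℝ) (hd : 0 < d)
    (a : Fin n → ℝ) (θ : ℝ) (hθ : θ = w / d) (hθ1 : θ < 1)
    (E : Matrix (Fin 2 ⊕ Fin n) (Fin 2 ⊕ Fin n) ℝ)
    (hE : ∀ i j, i = Sum.inl 0 ∨ j = Sum.inl 0 → E i j = 0)
    (X Y R : Matrix (Fin 2 ⊕ Fin n) (Fin 2 ⊕ Fin n) ℝ)
    (hX : X = Matrix.fromBlocks !![d, -w; -w, w]
        (Matrix.of fun i l => if i = 0 then -a l else 0)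
        (Matrix.of fun k j => if j = 0 then -a k else 0)
        (Matrix.diagonal a) + E)
    (hY : Y = Matrix.fromBlocks !![d * (1 - θ) ^ 2, 0; 0, w - w ^ 2 / d]
        (Matrix.of fun i l => if i = 0 then -((1 - θ) * a l) else -(w / d * a l))
        (Matrix.of fun k j => if j = 0 then -((1 - θ) * a k) else -(w / d * a k))
        (Matrix.diagonal a) + E)
    (hR : R = 1 + (θ / (1 - θ)) • Matrix.vecMulVec
        (fun k => (if k = Sum.inl 0 then 1 else 0) - (if k = Sum.inl 1 then 1 else 0))
        (fun k => if k = Sum.inl 0 then (1 : ℝ) else 0)) :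
    R * Y * Rᵀ = X := by
  replace hR : R = edgeEliminationRowOp n θ := by
    rw [hR, edgeEliminationRowOp]
    congr <;> ext k <;> simp [Pi.single_apply]
  replace hX : X = starMatrix d w a + E := hX
  replace hY : Y = edgeEliminatedStarMatrix d w θ a + E := hY
  have hErow : E.row (Sum.inl 0) = 0 := funext fun j => hE _ j (Or.inl rfl)
  have hEcol : E.col (Sum.inl 0) = 0 := funext fun i => hE i _ (Or.inr rfl)
  rw [hR, hY, hX, Matrix.mul_add, Matrix.add_mul,
    edgeEliminationRowOp_mul_edgeEliminatedStarMatrix_mul_transpose a hd.ne' hθ hθ1.ne,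
    edgeEliminationRowOp,
    one_add_smul_vecMulVec_single_mul_mul_transpose_of_row_eq_zero_of_col_eq_zero _ _ hErow hEcol]

/-- Single-edge elimination identity: the row operation
`R = I + (θ/(1-θ))(e₁ - e₂)e₁ᵀ` (with `θ = w/d < 1`) transforms the "eliminated"
matrix `Y` back into `X`, where the blocks are indexed so that the first coordinate
is the vertex being eliminated, the second is the current neighbor, and the
remaining `n` coordinates are the other vertices, and `E` is an arbitrary matrix
supported on the lower-right block (i.e. vanishing on the first row and column). -/
theorem single_edge_elimination {n : ℕ} (d w : ℝ) (hd : 0 < d) (hw : 0 < w)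
    (a : Fin n → ℝ) (θ : ℝ) (hθ : θ = w / d) (hθ1 : θ < 1)
    (E : Matrix (Fin 2 ⊕ Fin n) (Fin 2 ⊕ Fin n) ℝ)
    (hE : ∀ i j, i = Sum.inl 0 ∨ j = Sum.inl 0 → E i j = 0)
    (X Y R : Matrix (Fin 2 ⊕ Fin n) (Fin 2 ⊕ Fin n) ℝ)
    (hX : X = Matrix.fromBlocks !![d, -w; -w, w]
        (Matrix.of fun i l => if i = 0 then -a l else 0)
        (Matrix.of fun k j => if j = 0 then -a k else 0)
        (Matrix.diagonal a) + E)
    (hY : Y = Matrix.fromBlocks !![d * (1 - θ) ^ 2, 0; 0, w - w ^ 2 / d]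
        (Matrix.of fun i l => if i = 0 then -((1 - θ) * a l) else -(w / d * a l))
        (Matrix.of fun k j => if j = 0 then -((1 - θ) * a k) else -(w / d * a k))
        (Matrix.diagonal a) + E)
    (hR : R = 1 + (θ / (1 - θ)) • Matrix.vecMulVec
        (fun k => (if k = Sum.inl 0 then 1 else 0) - (if k = Sum.inl 1 then 1 else 0))
        (fun k => if k = Sum.inl 0 then (1 : ℝ) else 0)) :
    R * Y * Rᵀ = X :=
  single_edge_elimination_general d w hd a θ hθ hθ1 E hE X Y R hX hY hR
end

section
/- Let n > k ≥ 1, let a(1), …, a(k) be positive reals with d = Σ_j a(j), define θ_i = a(i)/(d − Σ_{j<i} a(j)) for i < k, and set ℒ_i = I + (θ_i/(1−θ_i))(e_1 − e_{1+i})e_1ᵀ for i = 1, …, k−1, ℒ_k = I − e_{1+k} e_1ᵀ, and φ = a(k)²/d, all in ℝ^{n×n}. Let v = d·e_1 − Σ_{i=1}^k a(i)·e_{1+i}. Then for every matrix M ∈ ℝ^{n×n} with zero first row and zero first column, M + (1/d)·v vᵀ = ℒ_1 ℒ_2 ⋯ ℒ_k · (φ·e_1 e_1ᵀ + M) · ℒ_kᵀ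 ⋯ ℒ_2ᵀ ℒ_1ᵀ. In particular, the standard lower-triangular form and the row-operation (product) form of (approximate) Cholesky factorization of a Laplacian produce identical linear operators when run with the same elimination order and the same clique-sample outcomes. -/
open Matrix Finset

private lemma aux_mul_vecMulVec {n : ℕ} (A : Matrix (Fin n) (Fin n) ℝ) (x y : Fin n → ℝ) :
    A * Matrix.vecMulVec x y = Matrix.vecMulVec (A *ᵥ x) y := by
  ext i j
  simp [Matrix.mul_apply, Matrix.vecMulVec_apply, Matrix.mulVec, dotProduct,
    Finset.sum_mul, mul_assoc]

private lemma aux_vecMulVec_mul_tr {n : ℕ} (A : Matrix (Fin n) (Fin n) ℝ) (x y : Fin n → ℝ) :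
    Matrix.vecMulVec x y * Aᵀ = Matrix.vecMulVec x (A *ᵥ y) := by
  ext i j
  simp only [Matrix.mul_apply, Matrix.vecMulVec_apply, Matrix.transpose_apply,
    Matrix.mulVec, dotProduct, Finset.mul_sum]
  refine Finset.sum_congr rfl fun l _ => ?_
  ring

private lemma aux_vecMulVec_mulVec {n : ℕ} (u w x : Fin n → ℝ) :
    Matrix.vecMulVec u w *ᵥ x = (w ⬝ᵥ x) • u := by
  ext i
  simp only [Matrix.mulVec, Matrix.vecMulVec_apply, dotProduct, Pi.smul_apply,
    smul_eq_mul, Finset.sum_mul]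
  refine Finset.sum_congr rfl fun l _ => ?_
  ring

private lemma aux_vecMulVec_tr {n : ℕ} (x y : Fin n → ℝ) :
    (Matrix.vecMulVec x y)ᵀ = Matrix.vecMulVec y x := by
  ext i j
  simp [Matrix.vecMulVec_apply, mul_comm]

private lemma aux_vecMulVec_smul {n : ℕ} (c : ℝ) (x : Fin n → ℝ) :
    Matrix.vecMulVec (c • x) (c • x) = (c * c) • Matrix.vecMulVec x x := by
  ext i j
  simp [Matrix.vecMulVec_apply]
  ring

/-- Equivalence of the standard rank-one (lower-triangular) form and the
row-operation (product) form of one vertex elimination in (approximate) Cholesky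
factorization of a Laplacian: for the eliminated vertex at coordinate `0` with
neighbors at coordinates `1, …, k` carrying positive weights `a(1), …, a(k)`,
`M + (1/d) v vᵀ = ℒ₁ ℒ₂ ⋯ ℒ_k (φ e₁ e₁ᵀ + M) ℒ_kᵀ ⋯ ℒ₂ᵀ ℒ₁ᵀ`
for every matrix `M` with zero first row and zero first column. -/
theorem rowOperation_form_eq_cholesky_form {n k : ℕ} (hk : 1 ≤ k) (hkn : k < n)
    (a : ℕ → ℝ) (ha : ∀ i, 1 ≤ i → i ≤ k → 0 < a i)
    (d : ℝ) (hd : d = ∑ i ∈ Finset.Icc 1 k, a i)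
    (θ : ℕ → ℝ) (hθ : ∀ i, θ i = a i / (d - ∑ j ∈ Finset.Ico 1 i, a j))
    (basis : ℕ → Fin n → ℝ)
    (hbasis : ∀ m, basis m = fun t : Fin n => if (t : ℕ) = m then (1 : ℝ) else 0)
    (Lop : ℕ → Matrix (Fin n) (Fin n) ℝ)
    (hLop : ∀ i, Lop i = if i = k then 1 - Matrix.vecMulVec (basis k) (basis 0)
      else 1 + (θ i / (1 - θ i)) • Matrix.vecMulVec (basis 0 - basis i) (basis 0))
    (φ : ℝ) (hφ : φ = (a k) ^ 2 / d)
    (v : Fin n → ℝ) (hv : v = d • basis 0 - ∑ i ∈ Finset.Icc 1 k, a i • basis i)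
    (M : Matrix (Fin n) (Fin n) ℝ)
    (hM : ∀ i j : Fin n, ((i : ℕ) = 0 ∨ (j : ℕ) = 0) → M i j = 0) :
    M + (1 / d) • Matrix.vecMulVec v v =
      ((List.range k).map (fun i => Lop (i + 1))).prod
        * (φ • Matrix.vecMulVec (basis 0) (basis 0) + M)
        * (((List.range k).map (fun i => Lop (i + 1))).prod)ᵀ := by
  have h0n : 0 < n := lt_of_le_of_lt (Nat.zero_le k) hkn
  set z : Fin n := ⟨0, h0n⟩ with hz
  have hb0 : ∀ x : Fin n → ℝ, basis 0 ⬝ᵥ x = x z := by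
    intro x
    have he : ∀ t : Fin n, ((t : ℕ) = 0) = (t = z) := by
      intro t; simp [Fin.ext_iff, hz]
    simp [hbasis, dotProduct, he, Finset.sum_ite_eq']
  have hbz : ∀ m : ℕ, 1 ≤ m → basis m z = 0 := by
    intro m hm
    simp [hbasis, hz]
    omega
  have hb00 : basis 0 z = 1 := by simp [hbasis, hz]
  set s : ℕ → ℝ := fun m => ∑ i ∈ Finset.Icc m k, a i with hs
  have hspos : ∀ m, 1 ≤ m → m ≤ k → 0 < s m := by
    intro m h1 h2
    apply Finset.sum_pos
    · intro i hi
      simp only [Finset.mem_Icc] at hi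
      exact ha i (le_trans h1 hi.1) hi.2
    · exact ⟨m, by simp [Finset.mem_Icc, h2]⟩
  have hd1 : d = s 1 := hd
  have hdpos : 0 < d := hd1 ▸ hspos 1 le_rfl hk
  have hd0 : d ≠ 0 := ne_of_gt hdpos
  have hak : 0 < a k := ha k hk le_rfl
  have hak0 : a k ≠ 0 := ne_of_gt hak
  have hsrec : ∀ m, 1 ≤ m → m ≤ k → s m = a m + s (m + 1) := by
    intro m h1 h2
    have hc : Finset.Icc m k = Finset.cons m (Finset.Ioc m k) (by simp) :=
      Finset.Icc_eq_cons_Ioc h2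
    simp only [hs]
    rw [hc, Finset.sum_cons, ← Finset.Icc_add_one_left_eq_Ioc]
  have hθval : ∀ m, 1 ≤ m → m ≤ k → θ m = a m / s m := by
    intro m h1 h2
    rw [hθ m]
    congr 1
    have hsc : ∑ i ∈ Finset.Ico 1 m, a i + ∑ i ∈ Finset.Ico m (k + 1), a i
        = ∑ i ∈ Finset.Ico 1 (k + 1), a i :=
      Finset.sum_Ico_consecutive a h1 (by omega)
    have hsm : s m = ∑ i ∈ Finset.Ico m (k + 1), a i := by
      simp only [hs]; rw [← Finset.Ico_add_one_right_eq_Icc]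
    rw [hsm, hd, ← Finset.Ico_add_one_right_eq_Icc, ← hsc]
    ring
  -- main induction: action of partial products on basis 0
  have key : ∀ j, 1 ≤ j → j ≤ k →
      ((List.range j).map (fun i => Lop (k - j + (i + 1)))).prod *ᵥ basis 0
        = (s (k - j + 1) / a k) • basis 0
          - (a k)⁻¹ • ∑ i ∈ Finset.Icc (k - j + 1) k, a i • basis i := by
    intro j hj1 hjk
    induction j, hj1 using Nat.le_induction with
    | base =>
      have hr1 : List.range 1 = [0] := by decide
      have hkk : k - 1 + (0 + 1) = k := by omega
      have hk1 : k - 1 + 1 = k := by omega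
      rw [hr1]
      simp only [List.map_cons, List.map_nil, List.prod_cons, List.prod_nil, mul_one, hkk, hk1]
      rw [hLop k, if_pos rfl, Matrix.sub_mulVec, Matrix.one_mulVec, aux_vecMulVec_mulVec, hb0,
        hb00]
      have hsk : s k = a k := by simp [hs]
      rw [hsk, Finset.Icc_self, Finset.sum_singleton, div_self hak0,
        smul_smul, inv_mul_cancel₀ hak0, one_smul, one_smul]
    | succ j hj1 ih =>
      have hjk' : j ≤ k := by omega
      have hm1 : 1 ≤ k - j := by omega
      have hmk : k - j < k := by omega
      have hmk' : k - j ≤ k := le_of_lt hmk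
      have hfun : ((fun i => Lop (k - (j + 1) + (i + 1))) ∘ (· + 1))
          = (fun i => Lop (k - j + (i + 1))) := by
        funext i
        simp only [Function.comp_apply]
        have hi : k - (j + 1) + (i + 1 + 1) = k - j + (i + 1) := by omega
        rw [hi]
      have e1 : k - (j + 1) + 1 = k - j := by omega
      rw [List.range_succ_eq_map]
      simp only [List.map_cons, List.prod_cons, List.map_map, zero_add, hfun, e1]
      rw [← Matrix.mulVec_mulVec, ih hjk']
      rw [hLop (k - j), if_neg (by omega)]
      rw [Matrix.add_mulVec, Matrix.one_mulVec, Matrix.smul_mulVec,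
        aux_vecMulVec_mulVec, hb0]
      have hsum : (∑ i ∈ Finset.Icc (k - j + 1) k, a i • basis i) z = 0 := by
        rw [Finset.sum_apply]
        refine Finset.sum_eq_zero fun i hi => ?_
        simp only [Finset.mem_Icc] at hi
        simp [hbz i (by omega)]
      have hxz : ((s (k - j + 1) / a k) • basis 0
          - (a k)⁻¹ • ∑ i ∈ Finset.Icc (k - j + 1) k, a i • basis i) z
          = s (k - j + 1) / a k := by
        simp [hsum, hb00]
      rw [hxz]
      have hsm1pos : 0 < s (k - j + 1) := hspos _ (by omega) (by omega)
      have hsm1ne : s (k - j + 1) ≠ 0 := ne_of_gt hsm1pos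
      have hsmpos : 0 < s (k - j) := hspos _ hm1 hmk'
      have hsmne : s (k - j) ≠ 0 := ne_of_gt hsmpos
      have hθm : θ (k - j) = a (k - j) / s (k - j) := hθval _ hm1 hmk'
      have hrec := hsrec (k - j) hm1 hmk'
      have h1θ : 1 - θ (k - j) = s (k - j + 1) / s (k - j) := by
        rw [hθm, eq_div_iff hsmne, sub_mul, one_mul, div_mul_cancel₀ _ hsmne, hrec]
        ring
      have hcoef : θ (k - j) / (1 - θ (k - j)) * (s (k - j + 1) / a k)
          = a (k - j) / a k := by
        rw [h1θ, hθm]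
        field_simp
      have hsum2 : ∑ i ∈ Finset.Icc (k - j) k, a i • basis i
          = a (k - j) • basis (k - j) + ∑ i ∈ Finset.Icc (k - j + 1) k, a i • basis i := by
        rw [Finset.Icc_eq_cons_Ioc hmk', Finset.sum_cons, ← Finset.Icc_add_one_left_eq_Ioc]
      rw [smul_smul, hcoef, hsum2, hrec]
      funext t
      simp only [Pi.add_apply, Pi.sub_apply, Pi.smul_apply, smul_eq_mul]
      field_simp
      ring
  -- action on M is trivial
  have hrowM : ∀ u : Fin n → ℝ, Matrix.vecMulVec u (basis 0) * M = 0 := by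
    intro u
    ext i j
    simp only [Matrix.mul_apply, Matrix.vecMulVec_apply, Matrix.zero_apply]
    refine Finset.sum_eq_zero fun l _ => ?_
    rcases eq_or_ne (l : ℕ) 0 with h | h
    · rw [hM l j (Or.inl h)]; ring
    · simp [hbasis, h]
  have hcolM : ∀ u : Fin n → ℝ, M * Matrix.vecMulVec (basis 0) u = 0 := by
    intro u
    ext i j
    simp only [Matrix.mul_apply, Matrix.vecMulVec_apply, Matrix.zero_apply]
    refine Finset.sum_eq_zero fun l _ => ?_
    rcases eq_or_ne (l : ℕ) 0 with h | h
    · rw [hM i l (Or.inr h)]; ring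
    · simp [hbasis, h]
  have hfact : ∀ i ∈ List.range k, ∃ u, Lop (i + 1) = 1 + Matrix.vecMulVec u (basis 0) := by
    intro i hi
    by_cases h : i + 1 = k
    · refine ⟨-(basis k), ?_⟩
      rw [hLop (i + 1), if_pos h, sub_eq_add_neg]
      congr 1
      ext r c
      simp [Matrix.vecMulVec_apply]
    · refine ⟨(θ (i + 1) / (1 - θ (i + 1))) • (basis 0 - basis (i + 1)), ?_⟩
      rw [hLop (i + 1), if_neg h]
      congr 1
      ext r c
      simp [Matrix.vecMulVec_apply]
      ring
  have hprodM : ∀ L : List (Matrix (Fin n) (Fin n) ℝ),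
      (∀ A ∈ L, ∃ u, A = 1 + Matrix.vecMulVec u (basis 0)) →
      L.prod * M = M ∧ M * (L.prod)ᵀ = M := by
    intro L
    induction L with
    | nil => intro _; simp
    | cons A t iht =>
      intro hall
      obtain ⟨u, hu⟩ := hall A (List.mem_cons_self (a := A) (l := t))
      have ht := iht fun B hB => hall B (List.mem_cons_of_mem _ hB)
      constructor
      · rw [List.prod_cons, mul_assoc, ht.1, hu, add_mul, one_mul, hrowM, add_zero]
      · rw [List.prod_cons, Matrix.transpose_mul, ← mul_assoc, ht.2, hu,
          Matrix.transpose_add, Matrix.transpose_one, aux_vecMulVec_tr, mul_add, mul_one,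
          hcolM, add_zero]
  set P := ((List.range k).map (fun i => Lop (i + 1))).prod with hP
  have hPfacts : ∀ A ∈ (List.range k).map (fun i => Lop (i + 1)),
      ∃ u, A = 1 + Matrix.vecMulVec u (basis 0) := by
    intro A hA
    simp only [List.mem_map] at hA
    obtain ⟨i, hi, rfl⟩ := hA
    exact hfact i hi
  obtain ⟨hPM, hMP⟩ := hprodM _ hPfacts
  have hw : P *ᵥ basis 0 = (a k)⁻¹ • v := by
    have hkey := key k hk le_rfl
    simp only [Nat.sub_self, Nat.zero_add, zero_add] at hkey
    rw [hP, hkey, hv, smul_sub, smul_smul, hd1]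
    congr 1
    rw [div_eq_inv_mul]
  have h2 : P * (φ • Matrix.vecMulVec (basis 0) (basis 0) + M) * Pᵀ
      = φ • Matrix.vecMulVec (P *ᵥ basis 0) (P *ᵥ basis 0) + M := by
    rw [mul_add, hPM, add_mul, hMP]
    congr 1
    rw [Matrix.mul_smul, Matrix.smul_mul, aux_mul_vecMulVec, aux_vecMulVec_mul_tr]
  rw [h2, hw, aux_vecMulVec_smul, smul_smul, hφ]
  have hc : a k ^ 2 / d * ((a k)⁻¹ * (a k)⁻¹) = 1 / d := by
    field_simp
  rw [hc, add_comm]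
end

section
/- Gremban reduction: Let M ∈ ℝ^{n×n} be an SDDM matrix, written as M = D + L where L is a weighted graph Laplacian and D is a nonnegative diagonal matrix with diagonal vector d· ∈ ℝⁿ. Define the (n+1)×(n+1) matrix L̂ that agrees with L on the first n coordinates augmented by, for each i with d·(i) > 0, an edge of weight d·(i) between vertex i and the extra vertex n+1; that is, L̂ = [[L + D, −d·], [−d·ᵀ, Σ_i d·(i)]]. Then L̂ is a weighted graph Laplacian on n+1 vertices, and for any b ∈ ℝⁿ, if y ∈ ℝ^{n+1} satisfies L̂ y = b̂ where b̂ = (b, −Σ_i b(i)), then the vector x ∈ ℝⁿ defined by x(i) = y(i) − y(n+1) satisfies M x = b. -/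
open Matrix Finset

/-! A matrix is a weighted Laplacian iff it is symmetric, has nonpositive off-diagonal entries and
zero row sums: the weights are the negated off-diagonal entries. The bordered matrix inherits these
properties because the row sums of `D + L` are the entries of `d`, which the new column cancels.
Row `i ≤ n` of `L̂ y = b̂` reads `(D + L) y' - d i * y (n+1) = b i` with `y'` the first `n`
coordinates of `y`, and since `(D + L) 𝟙 = d` this is `(D + L) (y' - y (n+1) 𝟙) = b`. -/

lemma sum_sum_eq_two_nsmul_sum_sum_lt {m β : Type*} [Fintype m] [LinearOrder m]
    [AddCommMonoid β] (g : m → m → β) (hg : ∀ i j, g i j = g j i) (hdiag : ∀ i, g i i = 0) :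
    ∑ i, ∑ j, g i j = 2 • ∑ i, ∑ j, if i < j then g i j else 0 := by
  have hsplit : ∀ i j, g i j = (if i < j then g i j else 0) + (if j < i then g j i else 0) := by
    intro i j
    rcases lt_trichotomy i j with h | rfl | h
    · simp [h, h.not_gt]
    · simp [hdiag]
    · simp [h, h.not_gt, hg i j]
  rw [two_nsmul]
  conv_lhs => enter [2, i, 2, j]; rw [hsplit i j]
  simp only [Finset.sum_add_distrib]
  rw [Finset.sum_comm (f := fun i j => if j < i then g j i else 0)]

section Edges

variable {m : Type*} [DecidableEq m]

lemma edgeVec_swap (i j : m) : edgeVec j i = -edgeVec i j := by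
  ext k; simp only [edgeVec, Pi.neg_apply]; ring

lemma edgeVec_self (i : m) : edgeVec i i = 0 := by
  ext k; simp [edgeVec]

lemma sum_sum_smul_vecMulVec_edgeVec_apply [Fintype m] (w : m → m → ℝ)
    (hw : ∀ i j, w i j = w j i) (a b : m) :
    (∑ i, ∑ j, w i j • vecMulVec (edgeVec i j) (edgeVec i j)) a b
      = 2 * ((if a = b then ∑ j, w a j else 0) - w a b) := by
  have hcol : ∑ i, w i a = ∑ j, w a j := Finset.sum_congr rfl fun i _ => hw i a
  simp only [Matrix.sum_apply, Matrix.smul_apply, vecMulVec_apply, edgeVec, smul_eq_mul,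
    mul_sub, mul_ite, mul_one, mul_zero, Finset.sum_sub_distrib, Finset.sum_ite_eq,
    Finset.mem_univ, if_true]
  split_ifs with hab
  · subst hab; rw [Finset.sum_comm]; simp [hcol]; ring
  · simp [hab, hw a b]; ring

end Edges

section Laplacian

variable {m : Type*} [Fintype m] [LinearOrder m]

lemma sum_lt_smul_vecMulVec_edgeVec (w : m → m → ℝ) (hw : ∀ i j, w i j = w j i) :
    (∑ i, ∑ j, if i < j then w i j • vecMulVec (edgeVec i j) (edgeVec i j) else 0)
      = diagonal (fun a => ∑ j, w a j) - of w := by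
  ext a b
  have hfull := sum_sum_smul_vecMulVec_edgeVec_apply w hw a b
  rw [sum_sum_eq_two_nsmul_sum_sum_lt _ (fun i j => by rw [hw, edgeVec_swap, vecMulVec_neg,
    neg_vecMulVec, neg_neg]) (fun i => by rw [edgeVec_self, zero_vecMulVec, smul_zero])] at hfull
  simp only [Matrix.smul_apply, nsmul_eq_mul, Nat.cast_ofNat] at hfull
  simp only [Matrix.sub_apply, diagonal_apply, of_apply]
  linarith

theorem isLaplacian_iff (A : Matrix m m ℝ) :
    IsLaplacian A ↔ A.IsSymm ∧ (∀ i j, i ≠ j → A i j ≤ 0) ∧ ∀ i, ∑ j, A i j = 0 := by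
  constructor
  · rintro ⟨w, hw_nonneg, hw_symm, rfl⟩
    rw [sum_lt_smul_vecMulVec_edgeVec w hw_symm]
    refine ⟨IsSymm.ext fun i j => ?_, fun i j hij => ?_, fun i => ?_⟩
    · by_cases h : i = j
      · rw [h]
      · simp [diagonal_apply_ne _ h, diagonal_apply_ne _ (Ne.symm h), hw_symm i j]
    · simpa [diagonal_apply_ne _ hij] using hw_nonneg i j
    · simp [diagonal_apply, Finset.sum_sub_distrib]
  · rintro ⟨hsymm, hoff, hrow⟩
    refine ⟨fun i j => if i = j then 0 else -A i j, fun i j => ?_, fun i j => ?_, ?_⟩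
    · dsimp only
      split_ifs with h
      exacts [le_rfl, neg_nonneg.mpr (hoff i j h)]
    · simp [eq_comm, hsymm.apply j i]
    · rw [sum_lt_smul_vecMulVec_edgeVec _ fun i j => by simp [eq_comm, hsymm.apply j i]]
      ext a b
      by_cases hab : a = b
      · subst hab
        have hw : ∀ j, (if a = j then 0 else -A a j) = (if a = j then A a j else 0) - A a j := by
          intro j; split_ifs with h <;> simp [h]
        simp [hw, Finset.sum_sub_distrib, hrow a]
      · simp [hab]

lemma sum_diagonal_add_apply_of_isLaplacian {L : Matrix m m ℝ} (hL : IsLaplacian L)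
    (d : m → ℝ) (i : m) :
    ∑ j, (diagonal d + L) i j = d i := by
  simp [Finset.sum_add_distrib, diagonal_apply, ((isLaplacian_iff L).mp hL).2.2 i]

end Laplacian

section Border

variable {n : ℕ}

/-- The matrix `[[M, -d], [-dᵀ, Σᵢ d i]]`; the last index is the extra vertex. -/
def borderMatrix (M : Matrix (Fin n) (Fin n) ℝ) (d : Fin n → ℝ) :
    Matrix (Fin (n + 1)) (Fin (n + 1)) ℝ :=
  of fun i j => Fin.lastCases (Fin.lastCases (∑ t, d t) (fun j => -d j) j)
    (fun i => Fin.lastCases (-d i) (fun j => M i j) j) i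

variable (M : Matrix (Fin n) (Fin n) ℝ) (d : Fin n → ℝ)

@[simp] lemma borderMatrix_castSucc_castSucc (i j : Fin n) :
    borderMatrix M d i.castSucc j.castSucc = M i j := by
  simp [borderMatrix]

@[simp] lemma borderMatrix_castSucc_last (i : Fin n) :
    borderMatrix M d i.castSucc (Fin.last n) = -d i := by
  simp [borderMatrix]

@[simp] lemma borderMatrix_last_castSucc (j : Fin n) :
    borderMatrix M d (Fin.last n) j.castSucc = -d j := by
  simp [borderMatrix]

@[simp] lemma borderMatrix_last_last :
    borderMatrix M d (Fin.last n) (Fin.last n) = ∑ t, d t := by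
  simp [borderMatrix]

lemma mulVec_borderMatrix_castSucc (y : Fin (n + 1) → ℝ) (i : Fin n) :
    (borderMatrix M d *ᵥ y) i.castSucc
      = (M *ᵥ fun j => y j.castSucc) i - d i * y (Fin.last n) := by
  simp [mulVec, dotProduct, Fin.sum_univ_castSucc, sub_eq_add_neg]

lemma mulVec_sub_last_eq_of_borderMatrix_mulVec (hrow : ∀ i, ∑ j, M i j = d i)
    (y : Fin (n + 1) → ℝ) (b : Fin n → ℝ) (hy : ∀ i, (borderMatrix M d *ᵥ y) i.castSucc = b i) :
    M *ᵥ (fun i => y i.castSucc - y (Fin.last n)) = b := by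
  ext i
  rw [← hy i, mulVec_borderMatrix_castSucc, ← hrow i]
  simp only [mulVec, dotProduct, mul_sub, Finset.sum_sub_distrib, Finset.sum_mul]

theorem isLaplacian_borderMatrix {L : Matrix (Fin n) (Fin n) ℝ} (hL : IsLaplacian L)
    (hd : ∀ i, 0 ≤ d i) : IsLaplacian (borderMatrix (diagonal d + L) d) := by
  obtain ⟨hsymm, hoff, -⟩ := (isLaplacian_iff L).mp hL
  have hMsymm : (diagonal d + L).IsSymm := (isSymm_diagonal d).add hsymm
  rw [isLaplacian_iff]
  refine ⟨IsSymm.ext fun i j => ?_, fun i j hij => ?_, fun i => ?_⟩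
  · cases i using Fin.lastCases <;> cases j using Fin.lastCases <;> simp [hMsymm.apply]
  · cases i using Fin.lastCases <;> cases j using Fin.lastCases
    · exact absurd rfl hij
    · simpa using hd _
    · simpa using hd _
    · rw [Ne, Fin.castSucc_inj] at hij
      simpa [diagonal_apply_ne _ hij] using hoff _ _ hij
  · cases i using Fin.lastCases
    · simp [Fin.sum_univ_castSucc]
    · rw [Fin.sum_univ_castSucc]
      simp only [borderMatrix_castSucc_castSucc, borderMatrix_castSucc_last,
        sum_diagonal_add_apply_of_isLaplacian hL, add_neg_cancel]

end Border

/-- Gremban reduction: for an SDDM matrix `M = D + L` (with `L` a Laplacian and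
`D = diag(dv)` nonnegative diagonal), the bordered matrix
`L̂ = [[L + D, -dv], [-dvᵀ, Σᵢ dv(i)]]` is a weighted graph Laplacian on `n+1`
vertices, and whenever `L̂ y = (b, -Σᵢ b(i))`, the vector
`x(i) = y(i) - y(n+1)` solves `M x = b`. -/
theorem gremban_reduction {n : ℕ} (M L : Matrix (Fin n) (Fin n) ℝ)
    (hL : IsLaplacian L) (dv : Fin n → ℝ) (hdv : ∀ i, 0 ≤ dv i)
    (hM : M = Matrix.diagonal dv + L)
    (Lhat : Matrix (Fin (n + 1)) (Fin (n + 1)) ℝ)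
    (hLhat : Lhat = Matrix.of fun i j : Fin (n + 1) =>
      if hi : (i : ℕ) < n then
        if hj : (j : ℕ) < n then M ⟨i, hi⟩ ⟨j, hj⟩ else -dv ⟨i, hi⟩
      else if hj : (j : ℕ) < n then -dv ⟨j, hj⟩ else ∑ t, dv t) :
    IsLaplacian Lhat ∧
    ∀ b : Fin n → ℝ, ∀ y : Fin (n + 1) → ℝ,
      Lhat.mulVec y = (fun i : Fin (n + 1) => if hi : (i : ℕ) < n then b ⟨i, hi⟩ else -∑ t, b t) →
      M.mulVec (fun i => y i.castSucc - y (Fin.last n)) = b := by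
  have hborder : Lhat = borderMatrix M dv := by
    subst hLhat
    ext i j
    cases i using Fin.lastCases <;> cases j using Fin.lastCases <;> simp [borderMatrix]
  subst hborder hM
  refine ⟨isLaplacian_borderMatrix dv hL hdv, fun b y hy => ?_⟩
  refine mulVec_sub_last_eq_of_borderMatrix_mulVec _ dv
    (sum_diagonal_add_apply_of_isLaplacian hL dv) y b fun i => ?_
  simpa using congrFun hy i.castSucc
end
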